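/- Let α, β > −1, n ≥ 2, and λ_n^J = (m(n)/m(n−1))·(m(n−1)/m(n−2) + α + β + 2). If y(x) = ∑_{p≥0} (a_p/m(p)) x^p is a formal solution of (1 − x²) ∂_m² y + [β − α − (α+β+2)x] ∂_m y + λ_n^J y = 0, then a_2 = −(β−α)a_1 − λ_n^J a_0, a_3 = [m(1)(α+β+2) + (β−α)² − λ_n^J] a_1 + λ_n^J (β−α) a_0, and for p ≥ 2, a_{p+2}/m(p+2) = [ (m(p)/m(p+2)) ( (m(p)/m(p−1))(m(p−1)/m(p−2) + α+β+2) − λ_n^J ) ] a_p/m(p) − [ (β−α) m(p+1)/m(p+2) ] a_{p+1}/m(p+1). In particular, if a_0, a_1 are chosen so that a_{n+1} = 0, then a_p = 0 for all p ≥ n+1 and y is a polynomial of degree at most n. -/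

import Mathlib

/-!
With `y = ∑ aₚ xᵖ / m(p)`, the moment derivative acts on the normalised coefficients as the shift
`aₚ ↦ aₚ₊₁`, so the coefficient of `xᵖ` in the equation is a linear relation between `aₚ`, `aₚ₊₁`
and `aₚ₊₂`; solving it for `aₚ₊₂` gives the recurrence. At `p = n` the coefficient of `aₙ` is
`λₙ - λₙ = 0`, so `aₙ₊₁ = 0` forces `aₙ₊₂ = 0`, and the recurrence then propagates the zeros.
-/

open PowerSeries

/-- The moment derivative associated to a sequence `m`. -/
noncomputable def mderiv (m : ℕ → ℝ) (f : PowerSeries ℂ) : PowerSeries ℂ :=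
  PowerSeries.mk fun p => ((m (p + 1) / m p : ℝ) : ℂ) * PowerSeries.coeff (p + 1) f

section MomentSeries

variable {m : ℕ → ℝ}

theorem coeff_mderiv (f : PowerSeries ℂ) (p : ℕ) :
    coeff p (mderiv m f) = ((m (p + 1) / m p : ℝ) : ℂ) * coeff (p + 1) f :=
  coeff_mk _ _

theorem mderiv_mk_div (hm : ∀ p, m p ≠ 0) (a : ℕ → ℂ) :
    mderiv m (mk fun p => a p / (m p : ℂ)) = mk fun p => a (p + 1) / (m p : ℂ) := by
  ext p
  have hp : (m (p + 1) : ℂ) ≠ 0 := Complex.ofReal_ne_zero.2 (hm (p + 1))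
  rw [coeff_mderiv, coeff_mk, coeff_mk, Complex.ofReal_div]
  field_simp

end MomentSeries

theorem coeff_one_sub_X_sq_mul_add_two {R : Type*} [Ring R] (f : PowerSeries R) (p : ℕ) :
    coeff (p + 2) ((1 - X ^ 2) * f) = coeff (p + 2) f - coeff p f := by
  rw [sub_mul, one_mul, map_sub, coeff_X_pow_mul]

theorem coeff_C_sub_C_mul_X_mul_succ {R : Type*} [Ring R] (t s : R) (f : PowerSeries R) (p : ℕ) :
    coeff (p + 1) ((C t - C s * X) * f) = t * coeff (p + 1) f - s * coeff p f := by
  rw [sub_mul, map_sub, coeff_C_mul, mul_assoc, coeff_C_mul, coeff_succ_X_mul]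

theorem eq_zero_of_recurrence_of_coeff_eq_zero {R : Type*} [Ring R] (u c d : ℕ → R) (N : ℕ)
    (hrec : ∀ p, N ≤ p → u (p + 2) = c p * u p - d p * u (p + 1))
    (hc : c N = 0) (hu : u (N + 1) = 0) : ∀ p, N + 1 ≤ p → u p = 0 := by
  have hpair : ∀ p, N + 1 ≤ p → u p = 0 ∧ u (p + 1) = 0 := by
    refine Nat.le_induction ⟨hu, ?_⟩ fun p hp ih => ⟨ih.2, ?_⟩
    · rw [hrec N le_rfl, hc, hu]; simp
    · rw [hrec p (by omega), ih.1, ih.2]; simp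
  exact fun p hp => (hpair p hp).1

/-- The left-hand side of the paper's equation, with `t = β - α`, `s = α + β + 2` and `l = λₙ`. -/
noncomputable def jacobiMomentOp (m : ℕ → ℝ) (t s l : ℂ) (y : PowerSeries ℂ) : PowerSeries ℂ :=
  (1 - X ^ 2) * mderiv m (mderiv m y) + (C t - C s * X) * mderiv m y + C l * y

section JacobiCoeff

variable {m : ℕ → ℝ} (hm : ∀ p, m p ≠ 0) (t s l : ℂ) (a : ℕ → ℂ)
include hm

theorem coeff_zero_jacobiMomentOp :
    coeff 0 (jacobiMomentOp m t s l (mk fun p => a p / (m p : ℂ))) =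
      (a 2 + t * a 1 + l * a 0) / m 0 := by
  simp only [jacobiMomentOp, mderiv_mk_div hm, map_add, sub_mul, one_mul, map_sub,
    coeff_X_pow_mul', coeff_C_mul, mul_assoc, coeff_zero_X_mul, coeff_mk, zero_add, Nat.reduceAdd,
    nonpos_iff_eq_zero, OfNat.ofNat_ne_zero, ↓reduceIte, sub_zero, mul_zero]
  ring

theorem coeff_one_jacobiMomentOp :
    coeff 1 (jacobiMomentOp m t s l (mk fun p => a p / (m p : ℂ))) =
      (a 3 + t * a 2 + l * a 1) / m 1 - s * a 1 / m 0 := by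
  simp only [jacobiMomentOp, mderiv_mk_div hm, map_add, sub_mul, one_mul, map_sub,
    coeff_X_pow_mul', coeff_C_mul, mul_assoc, coeff_succ_X_mul, coeff_mk, Nat.reduceAdd,
    Nat.not_ofNat_le_one, ↓reduceIte, sub_zero, zero_add]
  ring

theorem coeff_add_two_jacobiMomentOp (p : ℕ) :
    coeff (p + 2) (jacobiMomentOp m t s l (mk fun p => a p / (m p : ℂ))) =
      (a (p + 4) + t * a (p + 3) + l * a (p + 2)) / m (p + 2)
        - s * a (p + 2) / m (p + 1) - a (p + 2) / m p := by
  simp only [jacobiMomentOp, mderiv_mk_div hm, map_add, coeff_one_sub_X_sq_mul_add_two,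
    coeff_C_sub_C_mul_X_mul_succ, coeff_C_mul, coeff_mk]
  ring

variable {t s l a} (hsol : jacobiMomentOp m t s l (mk fun p => a p / (m p : ℂ)) = 0)
include hsol

theorem a_two_of_jacobiMomentOp_eq_zero (hm0 : m 0 = 1) : a 2 = -t * a 1 - l * a 0 := by
  have h0 := congrArg (coeff 0) hsol
  rw [coeff_zero_jacobiMomentOp hm, map_zero, hm0, Complex.ofReal_one, div_one] at h0
  linear_combination h0

theorem a_three_of_jacobiMomentOp_eq_zero (hm0 : m 0 = 1) :
    a 3 = (m 1 * s + t ^ 2 - l) * a 1 + l * t * a 0 := by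
  have h1 := congrArg (coeff 1) hsol
  rw [coeff_one_jacobiMomentOp hm, map_zero, hm0, Complex.ofReal_one, div_one,
    sub_eq_zero, div_eq_iff (Complex.ofReal_ne_zero.2 (hm 1))] at h1
  linear_combination h1 - t * a_two_of_jacobiMomentOp_eq_zero hm hsol hm0

theorem a_add_two_div_of_jacobiMomentOp_eq_zero {p : ℕ} (hp : 2 ≤ p) :
    a (p + 2) / m (p + 2) =
      m p / m (p + 2) * (m p / m (p - 1) * (m (p - 1) / m (p - 2) + s) - l) * (a p / m p)
        - t * (m (p + 1) / m (p + 2)) * (a (p + 1) / m (p + 1)) := by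
  obtain ⟨q, rfl⟩ : ∃ q, p = q + 2 := ⟨p - 2, by omega⟩
  have h := congrArg (coeff (q + 2)) hsol
  rw [coeff_add_two_jacobiMomentOp hm, map_zero] at h
  have hmC : ∀ k, (m k : ℂ) ≠ 0 := fun k => Complex.ofReal_ne_zero.2 (hm k)
  rw [Nat.add_sub_cancel, show q + 2 - 1 = q + 1 by omega]
  field_simp [hmC] at h ⊢
  linear_combination h

end JacobiCoeff

theorem stmt8_general (m : ℕ → ℝ) (hm : ∀ p, 0 < m p) (hm0 : m 0 = 1)
    (α β : ℝ) (n : ℕ) (hn : 2 ≤ n)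
    (a : ℕ → ℂ) (y : PowerSeries ℂ)
    (hy : y = PowerSeries.mk fun p => a p / (m p : ℂ))
    (heq : (1 - (X : PowerSeries ℂ) ^ 2) * mderiv m (mderiv m y)
      + (C ((β : ℂ) - α) - C ((α : ℂ) + β + 2) * X) * mderiv m y
      + C (((m n / m (n - 1)) * (m (n - 1) / m (n - 2) + α + β + 2) : ℝ) : ℂ) * y = 0) :
    a 2 = -((β : ℂ) - α) * a 1
        - (((m n / m (n - 1)) * (m (n - 1) / m (n - 2) + α + β + 2) : ℝ) : ℂ) * a 0 ∧
    a 3 = (((m 1 * (α + β + 2) + (β - α) ^ 2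
          - (m n / m (n - 1)) * (m (n - 1) / m (n - 2) + α + β + 2) : ℝ)) : ℂ) * a 1
        + (((m n / m (n - 1)) * (m (n - 1) / m (n - 2) + α + β + 2) : ℝ) : ℂ) * ((β : ℂ) - α) * a 0 ∧
    (∀ p, 2 ≤ p →
      a (p + 2) / (m (p + 2) : ℂ) =
        ((m p / m (p + 2) * ((m p / m (p - 1)) * (m (p - 1) / m (p - 2) + α + β + 2)
            - (m n / m (n - 1)) * (m (n - 1) / m (n - 2) + α + β + 2)) : ℝ) : ℂ) *
          (a p / (m p : ℂ))
        - (((β - α) * (m (p + 1) / m (p + 2)) : ℝ) : ℂ) * (a (p + 1) / (m (p + 1) : ℂ))) ∧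
    (a (n + 1) = 0 → ∀ p, n + 1 ≤ p → a p = 0) := by
  have hm' : ∀ p, m p ≠ 0 := fun p => (hm p).ne'
  subst hy
  change jacobiMomentOp m _ _ _ _ = 0 at heq
  have hrec := fun p (hp : 2 ≤ p) => a_add_two_div_of_jacobiMomentOp_eq_zero hm' heq hp
  refine ⟨a_two_of_jacobiMomentOp_eq_zero hm' heq hm0, ?_, fun p hp => ?_, fun han p hp => ?_⟩
  · have h := a_three_of_jacobiMomentOp_eq_zero hm' heq hm0
    push_cast at h ⊢
    linear_combination h
  · have h := hrec p hp
    push_cast at h ⊢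
    linear_combination h
  · have hu := eq_zero_of_recurrence_of_coeff_eq_zero (fun p => a p / (m p : ℂ)) _ _ n
      (fun p hp => hrec p (hn.trans hp)) (by push_cast; ring) (by rw [han, zero_div]) p hp
    exact (div_eq_zero_iff.1 hu).resolve_right (Complex.ofReal_ne_zero.2 (hm' p))

/-- Formal solutions of the generalized Jacobi moment differential equation satisfy the
stated three-term recurrence; if moreover `a (n+1) = 0` then `a p = 0` for all `p ≥ n+1`. -/
theorem stmt8 (m : ℕ → ℝ) (hm : ∀ p, 0 < m p) (hm0 : m 0 = 1)
    (α β : ℝ) (hα : -1 < α) (hβ : -1 < β) (n : ℕ) (hn : 2 ≤ n)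
    (a : ℕ → ℂ) (y : PowerSeries ℂ)
    (hy : y = PowerSeries.mk fun p => a p / (m p : ℂ))
    (heq : (1 - (X : PowerSeries ℂ) ^ 2) * mderiv m (mderiv m y)
      + (C ((β : ℂ) - α) - C ((α : ℂ) + β + 2) * X) * mderiv m y
      + C (((m n / m (n - 1)) * (m (n - 1) / m (n - 2) + α + β + 2) : ℝ) : ℂ) * y = 0) :
    a 2 = -((β : ℂ) - α) * a 1
        - (((m n / m (n - 1)) * (m (n - 1) / m (n - 2) + α + β + 2) : ℝ) : ℂ) * a 0 ∧
    a 3 = (((m 1 * (α + β + 2) + (β - α) ^ 2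
          - (m n / m (n - 1)) * (m (n - 1) / m (n - 2) + α + β + 2) : ℝ)) : ℂ) * a 1
        + (((m n / m (n - 1)) * (m (n - 1) / m (n - 2) + α + β + 2) : ℝ) : ℂ) * ((β : ℂ) - α) * a 0 ∧
    (∀ p, 2 ≤ p →
      a (p + 2) / (m (p + 2) : ℂ) =
        ((m p / m (p + 2) * ((m p / m (p - 1)) * (m (p - 1) / m (p - 2) + α + β + 2)
            - (m n / m (n - 1)) * (m (n - 1) / m (n - 2) + α + β + 2)) : ℝ) : ℂ) *
          (a p / (m p : ℂ))
        - (((β - α) * (m (p + 1) / m (p + 2)) : ℝ) : ℂ) * (a (p + 1) / (m (p + 1) : ℂ))) ∧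
    (a (n + 1) = 0 → ∀ p, n + 1 ≤ p → a p = 0) :=
  stmt8_general m hm hm0 α β n hn a y hy heq
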